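/- Suppose that 2 ≤ yi ≤ 2.2 for i = 1, 3, 6 and 2 ≤ yi ≤ 2.51 for i = 2, 4, 5. Then the dihedral angle along the first edge of the simplex S(y1,...,y6) is at least dih(S(2, 2.51, 2, 2, 2.51, 2)) ≈ 0.8639. -/

import Mathlib

noncomputable section

def ufun (a b c : ℝ) : ℝ := -a^2 - b^2 - c^2 + 2*a*b + 2*a*c + 2*b*c

/-- The partial derivative ∂Δ/∂x4 of the Cayley–Menger-type polynomial Δ. -/
def deltaX4 (x1 x2 x3 x4 x5 x6 : ℝ) : ℝ :=
  x1*(-x1+x2+x3-x4+x5+x6) - x1*x4 + x2*x5 + x3*x6 - x2*x3 - x5*x6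

/-- The dihedral angle of the simplex (v0,v1,v2,v3) along the edge v0v1 (the first edge). -/
def dihedralAngle (v0 v1 v2 v3 : EuclideanSpace ℝ (Fin 3)) : ℝ :=
  InnerProductGeometry.angle
    ((v2 - v0) - (((inner ℝ (v2 - v0) (v1 - v0) : ℝ)) / ‖v1 - v0‖^2) • (v1 - v0))
    ((v3 - v0) - (((inner ℝ (v3 - v0) (v1 - v0) : ℝ)) / ‖v1 - v0‖^2) • (v1 - v0))

/-- The dihedral angle along the first edge of S(2, 2.51, 2, 2, 2.51, 2),
computed from cos(dih) = (∂Δ/∂x4)/√(u(x1,x2,x6)u(x1,x3,x5)) at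
(x1,...,x6) = (4, 2.51², 4, 4, 2.51², 4);  ≈ 0.8639. -/
def dihMin : ℝ :=
  Real.arccos (deltaX4 4 (2.51^2) 4 4 (2.51^2) 4 /
    Real.sqrt (ufun 4 (2.51^2) 4 * ufun 4 4 (2.51^2)))

/-! Put `p = √u(x1,x2,x6)` and `q = √u(x1,x3,x5)`, so that `4 x1` times the squared heights of
`v2` and `v3` over the first edge are `p²` and `q²`. The law of cosines in the plane orthogonal to
that edge reads `2 ∂Δ/∂x4 = (x2 - x6 + x5 - x3)² + p² + q² - 4 x1 x4`; hence, with `c` the cosine of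
`dihMin`, the claim `cos dih ≤ c` amounts to
`(x2 - x6 + x5 - x3)² + (1 - c) (p² + q²) + c (p - q)² ≤ 4 x1 x4`.
For `x4 ≥ 4` everything but `c (p - q)²` is a quadratic polynomial, whose slack on the box is at
least `3/10 |p² - q²|`. The remaining term is smaller: `p², q² ∈ [48, 122]`, so
`(p - q)² = (p² - q²)² / (p + q)² ≤ 74 |p² - q²| / 192`. -/

open InnerProductGeometry Real Set

section Rejection

variable {V : Type*} [NormedAddCommGroup V] [InnerProductSpace ℝ V]

def rejection (u w : V) : V := w - (inner ℝ w u / ‖u‖ ^ 2) • u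

theorem four_mul_sq_norm_mul_inner_rejection (u w z : V) :
    4 * ‖u‖ ^ 2 * inner ℝ (rejection u w) (rejection u z) =
      deltaX4 (‖u‖ ^ 2) (‖w‖ ^ 2) (‖z‖ ^ 2) (‖w - z‖ ^ 2) (‖z - u‖ ^ 2) (‖w - u‖ ^ 2) := by
  rcases eq_or_ne u 0 with rfl | hu
  · simp only [norm_zero, sub_zero, deltaX4]
    ring
  have hu2 : ‖u‖ ^ 2 ≠ 0 := by positivity
  simp only [rejection, inner_sub_left, inner_sub_right, real_inner_smul_left,
    real_inner_smul_right, real_inner_self_eq_norm_sq, deltaX4]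
  rw [norm_sub_sq_real w z, norm_sub_sq_real z u, norm_sub_sq_real w u, real_inner_comm u z,
    real_inner_comm u w]
  field_simp
  ring

theorem four_mul_sq_norm_mul_sq_norm_rejection (u w : V) :
    4 * ‖u‖ ^ 2 * ‖rejection u w‖ ^ 2 = ufun (‖u‖ ^ 2) (‖w‖ ^ 2) (‖w - u‖ ^ 2) := by
  rw [← real_inner_self_eq_norm_sq (rejection u w), four_mul_sq_norm_mul_inner_rejection, sub_self,
    norm_zero, deltaX4, ufun]
  ring

theorem angle_rejection_rejection {u : V} (hu : u ≠ 0) (w z : V) :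
    angle (rejection u w) (rejection u z) =
      arccos (deltaX4 (‖u‖ ^ 2) (‖w‖ ^ 2) (‖z‖ ^ 2) (‖w - z‖ ^ 2) (‖z - u‖ ^ 2) (‖w - u‖ ^ 2) /
        √(ufun (‖u‖ ^ 2) (‖w‖ ^ 2) (‖w - u‖ ^ 2) * ufun (‖u‖ ^ 2) (‖z‖ ^ 2) (‖z - u‖ ^ 2))) := by
  have hu4 : 0 < 4 * ‖u‖ ^ 2 := by positivity
  rw [← four_mul_sq_norm_mul_inner_rejection, ← four_mul_sq_norm_mul_sq_norm_rejection,
    ← four_mul_sq_norm_mul_sq_norm_rejection,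
    show ∀ a b : ℝ, 4 * ‖u‖ ^ 2 * a ^ 2 * (4 * ‖u‖ ^ 2 * b ^ 2) = (4 * ‖u‖ ^ 2 * (a * b)) ^ 2 by
      intros; ring,
    sqrt_sq (by positivity), mul_div_mul_left _ _ hu4.ne']
  rfl

end Rejection

theorem dihedralAngle_eq_arccos {v0 v1 : EuclideanSpace ℝ (Fin 3)} (h : v0 ≠ v1)
    (v2 v3 : EuclideanSpace ℝ (Fin 3)) :
    dihedralAngle v0 v1 v2 v3 =
      arccos (deltaX4 (dist v0 v1 ^ 2) (dist v0 v2 ^ 2) (dist v0 v3 ^ 2) (dist v2 v3 ^ 2)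
          (dist v1 v3 ^ 2) (dist v1 v2 ^ 2) /
        √(ufun (dist v0 v1 ^ 2) (dist v0 v2 ^ 2) (dist v1 v2 ^ 2) *
          ufun (dist v0 v1 ^ 2) (dist v0 v3 ^ 2) (dist v1 v3 ^ 2))) := by
  change angle (rejection (v1 - v0) (v2 - v0)) (rejection (v1 - v0) (v3 - v0)) = _
  rw [angle_rejection_rejection (sub_ne_zero.2 h.symm)]
  simp only [sub_sub_sub_cancel_right, ← dist_eq_norm']
  rw [dist_comm v3 v2]

theorem two_mul_deltaX4 (x1 x2 x3 x4 x5 x6 : ℝ) :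
    2 * deltaX4 x1 x2 x3 x4 x5 x6 =
      (x2 - x6 + x5 - x3) ^ 2 + ufun x1 x2 x6 + ufun x1 x3 x5 - 4 * x1 * x4 := by
  simp only [deltaX4, ufun]
  ring

theorem ufun_comm₂₃ (a b c : ℝ) : ufun a b c = ufun a c b := by
  simp only [ufun]
  ring

theorem ufun_le_four_mul (a b c : ℝ) : ufun a b c ≤ 4 * a * b := by
  have : ufun a b c = 4 * a * b - (a + b - c) ^ 2 := by simp only [ufun]; ring
  linarith [sq_nonneg (a + b - c)]

theorem forty_eight_le_ufun {a b c : ℝ} (ha : a ∈ Icc 4 12) (hb : b ∈ Icc 4 12)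
    (hc : c ∈ Icc 4 12) : 48 ≤ ufun a b c := by
  obtain ⟨ha, ha'⟩ := ha
  obtain ⟨hb, hb'⟩ := hb
  obtain ⟨hc, hc'⟩ := hc
  simp only [ufun]
  nlinarith [mul_nonneg (sub_nonneg.2 ha) (sub_nonneg.2 hb),
    mul_nonneg (sub_nonneg.2 ha) (sub_nonneg.2 hc), mul_nonneg (sub_nonneg.2 hb) (sub_nonneg.2 hc),
    mul_nonneg (sub_nonneg.2 ha) (sub_nonneg.2 ha'),
    mul_nonneg (sub_nonneg.2 hb) (sub_nonneg.2 hb'),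
    mul_nonneg (sub_nonneg.2 hc) (sub_nonneg.2 hc')]

theorem sq_sqrt_sub_sqrt_mul_le {m U V : ℝ} (hm : 0 ≤ m) (hU : m ≤ U) (hV : m ≤ V) :
    (√U - √V) ^ 2 * (4 * m) ≤ (U - V) ^ 2 := by
  have hsum : 4 * m ≤ (√U + √V) ^ 2 := by
    have : 2 * √m ≤ √U + √V := by linarith [sqrt_le_sqrt hU, sqrt_le_sqrt hV]
    calc 4 * m = (2 * √m) ^ 2 := by norm_num [mul_pow, sq_sqrt hm]
      _ ≤ (√U + √V) ^ 2 := by gcongr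
  calc (√U - √V) ^ 2 * (4 * m) ≤ (√U - √V) ^ 2 * (√U + √V) ^ 2 := by gcongr
    _ = (U - V) ^ 2 := by
      rw [← mul_pow, mul_comm, ← sq_sub_sq, sq_sqrt (hm.trans hU), sq_sqrt (hm.trans hV)]

theorem sq_mem_Icc_sq {a b y : ℝ} (ha : 0 ≤ a) (hy : y ∈ Icc a b) : y ^ 2 ∈ Icc (a ^ 2) (b ^ 2) :=
  ⟨pow_le_pow_left₀ ha hy.1 2, pow_le_pow_left₀ (ha.trans hy.1) hy.2 2⟩

theorem ufun_sub_ufun_le {x1 x2 x3 x5 x6 : ℝ} (hx1 : 4 ≤ x1)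
    (hx2 : x2 ∈ Icc 4 (63001 / 10000)) (hx3 : x3 ∈ Icc 4 (121 / 25))
    (hx5 : x5 ∈ Icc 4 (63001 / 10000)) (hx6 : x6 ∈ Icc 4 (121 / 25)) :
    3 / 10 * (ufun x1 x2 x6 - ufun x1 x3 x5) ≤
      16 * x1 - (x2 - x6 + x5 - x3) ^ 2 -
        (1 - 63001 / 96999) * (ufun x1 x2 x6 + ufun x1 x3 x5) := by
  obtain ⟨hx2, hx2'⟩ := hx2
  obtain ⟨hx3, hx3'⟩ := hx3
  obtain ⟨hx5, hx5'⟩ := hx5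
  obtain ⟨hx6, hx6'⟩ := hx6
  simp only [ufun]
  nlinarith [mul_nonneg (sub_nonneg.2 hx2) (sub_nonneg.2 hx2'),
    mul_nonneg (sub_nonneg.2 hx3) (sub_nonneg.2 hx3'),
    mul_nonneg (sub_nonneg.2 hx5) (sub_nonneg.2 hx5'),
    mul_nonneg (sub_nonneg.2 hx6) (sub_nonneg.2 hx6')]

theorem abs_ufun_sub_ufun_le {x1 x2 x3 x5 x6 : ℝ} (hx1 : 4 ≤ x1)
    (hx2 : x2 ∈ Icc 4 (63001 / 10000)) (hx3 : x3 ∈ Icc 4 (121 / 25))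
    (hx5 : x5 ∈ Icc 4 (63001 / 10000)) (hx6 : x6 ∈ Icc 4 (121 / 25)) :
    3 / 10 * |ufun x1 x2 x6 - ufun x1 x3 x5| ≤
      16 * x1 - (x2 - x6 + x5 - x3) ^ 2 -
        (1 - 63001 / 96999) * (ufun x1 x2 x6 + ufun x1 x3 x5) := by
  have h := ufun_sub_ufun_le hx1 hx2 hx3 hx5 hx6
  -- exchanging the two faces through the first edge swaps the two `ufun` terms
  have h' := ufun_sub_ufun_le hx1 hx5 hx6 hx2 hx3
  rw [ufun_comm₂₃ x1 x5, ufun_comm₂₃ x1 x6] at h'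
  rcases abs_cases (ufun x1 x2 x6 - ufun x1 x3 x5) with ⟨h₀, -⟩ | ⟨h₀, -⟩ <;> rw [h₀] <;> linarith

theorem deltaX4_div_sqrt_le {x1 x2 x3 x4 x5 x6 : ℝ} (hx1 : x1 ∈ Icc (2 ^ 2) (2.2 ^ 2))
    (hx2 : x2 ∈ Icc (2 ^ 2) (2.51 ^ 2)) (hx3 : x3 ∈ Icc (2 ^ 2) (2.2 ^ 2)) (hx4 : 2 ^ 2 ≤ x4)
    (hx5 : x5 ∈ Icc (2 ^ 2) (2.51 ^ 2)) (hx6 : x6 ∈ Icc (2 ^ 2) (2.2 ^ 2)) :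
    deltaX4 x1 x2 x3 x4 x5 x6 / √(ufun x1 x2 x6 * ufun x1 x3 x5) ≤ 63001 / 96999 := by
  norm_num at hx1 hx2 hx3 hx4 hx5 hx6
  have hU : 48 ≤ ufun x1 x2 x6 :=
    forty_eight_le_ufun ⟨hx1.1, by linarith⟩ ⟨hx2.1, by linarith⟩ ⟨hx6.1, by linarith⟩
  have hV : 48 ≤ ufun x1 x3 x5 :=
    forty_eight_le_ufun ⟨hx1.1, by linarith⟩ ⟨hx3.1, by linarith⟩ ⟨hx5.1, by linarith⟩
  have hUV : |ufun x1 x2 x6 - ufun x1 x3 x5| ≤ 74 := by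
    have h12 : x1 * x2 ≤ 121 / 25 * (63001 / 10000) :=
      mul_le_mul hx1.2 hx2.2 (by linarith) (by norm_num)
    have h13 : x1 * x3 ≤ 121 / 25 * (121 / 25) :=
      mul_le_mul hx1.2 hx3.2 (by linarith) (by norm_num)
    rw [abs_le]
    constructor <;> linarith [ufun_le_four_mul x1 x2 x6, ufun_le_four_mul x1 x3 x5]
  have hslack := abs_ufun_sub_ufun_le hx1.1 hx2 hx3 hx5 hx6
  set U := ufun x1 x2 x6
  set V := ufun x1 x3 x5
  have hpq : 63001 / 96999 * (√U - √V) ^ 2 ≤ 3 / 10 * |U - V| := by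
    have h := sq_sqrt_sub_sqrt_mul_le (by norm_num) hU hV
    have h' : (U - V) ^ 2 ≤ 74 * |U - V| := by
      rw [← sq_abs, sq]
      exact mul_le_mul_of_nonneg_right hUV (abs_nonneg _)
    linarith [abs_nonneg (U - V)]
  have hΔ : 2 * deltaX4 x1 x2 x3 x4 x5 x6 ≤ (x2 - x6 + x5 - x3) ^ 2 + U + V - 16 * x1 := by
    have := mul_le_mul_of_nonneg_left hx4 (show 0 ≤ x1 by linarith)
    rw [two_mul_deltaX4]
    linarith
  have hsq : (√U - √V) ^ 2 = U + V - 2 * (√U * √V) := by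
    rw [sub_sq, sq_sqrt (by linarith), sq_sqrt (by linarith)]
    ring
  rw [sqrt_mul (by linarith), div_le_iff₀ (by positivity)]
  linarith

theorem dihMin_eq_arccos : dihMin = arccos (63001 / 96999) := by
  rw [dihMin, ufun_comm₂₃ 4 4, sqrt_mul_self (by norm_num [ufun])]
  norm_num [deltaX4, ufun]

theorem dihedral_ge_dihmin_general
    (y1 y2 y3 y4 y5 y6 : ℝ)
    (h1 : y1 ∈ Set.Icc (2:ℝ) 2.2) (h3 : y3 ∈ Set.Icc (2:ℝ) 2.2)
    (h6 : y6 ∈ Set.Icc (2:ℝ) 2.2)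
    (h2 : y2 ∈ Set.Icc (2:ℝ) 2.51) (h4 : y4 ∈ Set.Icc (2:ℝ) 2.51)
    (h5 : y5 ∈ Set.Icc (2:ℝ) 2.51)
    (v0 v1 v2 v3 : EuclideanSpace ℝ (Fin 3))
    (e1 : dist v0 v1 = y1) (e2 : dist v0 v2 = y2) (e3 : dist v0 v3 = y3)
    (e4 : dist v2 v3 = y4) (e5 : dist v1 v3 = y5) (e6 : dist v1 v2 = y6) :
    dihMin ≤ dihedralAngle v0 v1 v2 v3 := by
  have h01 : v0 ≠ v1 := by
    rintro rfl
    rw [dist_self] at e1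
    linarith [h1.1]
  rw [dihedralAngle_eq_arccos h01, e1, e2, e3, e4, e5, e6, dihMin_eq_arccos]
  exact arccos_le_arccos <| deltaX4_div_sqrt_le (sq_mem_Icc_sq zero_le_two h1)
    (sq_mem_Icc_sq zero_le_two h2) (sq_mem_Icc_sq zero_le_two h3)
    (sq_mem_Icc_sq zero_le_two h4).1 (sq_mem_Icc_sq zero_le_two h5) (sq_mem_Icc_sq zero_le_two h6)

/-- If 2 ≤ yi ≤ 2.2 for i = 1,3,6 and 2 ≤ yi ≤ 2.51 for i = 2,4,5, then the
dihedral angle along the first edge of S(y1,...,y6) is at least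
dih(S(2, 2.51, 2, 2, 2.51, 2)). -/
theorem dihedral_ge_dihmin
    (y1 y2 y3 y4 y5 y6 : ℝ)
    (h1 : y1 ∈ Set.Icc (2:ℝ) 2.2) (h3 : y3 ∈ Set.Icc (2:ℝ) 2.2)
    (h6 : y6 ∈ Set.Icc (2:ℝ) 2.2)
    (h2 : y2 ∈ Set.Icc (2:ℝ) 2.51) (h4 : y4 ∈ Set.Icc (2:ℝ) 2.51)
    (h5 : y5 ∈ Set.Icc (2:ℝ) 2.51)
    (v0 v1 v2 v3 : EuclideanSpace ℝ (Fin 3))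
    (hnd : AffineIndependent ℝ ![v0, v1, v2, v3])
    (e1 : dist v0 v1 = y1) (e2 : dist v0 v2 = y2) (e3 : dist v0 v3 = y3)
    (e4 : dist v2 v3 = y4) (e5 : dist v1 v3 = y5) (e6 : dist v1 v2 = y6) :
    dihMin ≤ dihedralAngle v0 v1 v2 v3 :=
  dihedral_ge_dihmin_general y1 y2 y3 y4 y5 y6 h1 h3 h6 h2 h4 h5 v0 v1 v2 v3 e1 e2 e3 e4 e5 e6
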